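/- arXiv:1511.04479 — 4 statements merged into one kernel-verified Lean document; each statement's English description precedes it below -/
import Mathlib

section
/- Let H be a finite simple graph whose vertices carry label sets from {1,...,k}, let i ≠ j be labels such that no vertex of H carries both i and j, and let H' = η_{i,j}(H) be the graph obtained from H by adding an edge between every vertex carrying label i and every vertex carrying label j (labels unchanged). Then (1) a set S of vertices is independent in H' if and only if S is independent in H and S does not contain both a vertex carrying label i and a vertex carrying label j; and (2) the [k]-labeled independent set polynomial of H' equals the sum of those monomials of the [k]-labeled independent set polynomial of H that are not divisible by x_i·x_j. -/
open MvPolynomial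

/-- A finite set `S` of vertices is independent in `G`. -/
def IndepF {α : Type*} (G : SimpleGraph α) (S : Finset α) : Prop :=
  ∀ u ∈ S, ∀ v ∈ S, ¬ G.Adj u v

open Classical in
/-- The `[k]`-labeled independent set polynomial of a labeled graph `(G, L)`:
`P(x, x₁, …, x_k) = Σ_S x^|S| ∏_{j ∈ ⋃_{v ∈ S} L v} x_j`,
where `S` ranges over the independent sets of `G` (including `∅`).
The variable `none` plays the role of `x`, and `some j` the role of `x_j`. -/
noncomputable def labIndepPoly {α : Type*} [Fintype α] {k : ℕ} (G : SimpleGraph α)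
    (L : α → Finset (Fin k)) : MvPolynomial (Option (Fin k)) ℤ :=
  ∑ S ∈ Finset.univ.filter (fun S : Finset α => IndepF G S),
    X none ^ S.card * ∏ j ∈ S.biUnion L, X (some j)

open Classical in
/-- The independent set polynomial `I(x) = Σ_i a_i x^i` of `G`, where `a_i` is the
number of independent sets of size `i` in `G` (with `a₀ = 1` for the empty set). -/
noncomputable def indepPoly {α : Type*} [Fintype α] (G : SimpleGraph α) : Polynomial ℤ :=
  ∑ i ∈ Finset.range (Fintype.card α + 1),
    Polynomial.C ((Finset.univ.filter
      (fun S : Finset α => IndepF G S ∧ S.card = i)).card : ℤ) * Polynomial.X ^ i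

/-- `η_{i,j}(G)`: add an edge between every vertex carrying label `i` and every vertex
carrying label `j` (labels unchanged). -/
def etaG {α : Type*} {k : ℕ} (G : SimpleGraph α) (L : α → Finset (Fin k))
    (i j : Fin k) : SimpleGraph α :=
  G ⊔ SimpleGraph.fromRel (fun u v => i ∈ L u ∧ j ∈ L v)

/-! The extra edges of `η_{i,j}(H)` kill exactly the independent sets of `H` that contain an
`i`-labeled and a `j`-labeled vertex; such a pair is never a single vertex, since no vertex carries
both labels. Each independent set `S` contributes the single monomial `x^|S| ∏_{l ∈ L(S)} x_l`,
which is divisible by `x_i x_j` exactly when `S` contains such a pair. So discarding these monomials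
from `P_H` discards exactly the killed sets, and what remains is `P_{η_{i,j}(H)}`. -/

open Finset

section Truncation

variable {σ R ι : Type*} [CommSemiring R] (P : (σ →₀ ℕ) → Prop) [DecidablePred P]

theorem MvPolynomial.coeff_sum_support_filter_monomial (p : MvPolynomial σ R) (m : σ →₀ ℕ) :
    coeff m (∑ d ∈ p.support with P d, monomial d (coeff d p)) = if P m then coeff m p else 0 := by
  classical
  simp only [coeff_sum, coeff_monomial, sum_ite_eq', mem_filter, mem_support_iff]
  by_cases h : P m <;> by_cases h' : coeff m p = 0 <;> simp [h, h']

theorem MvPolynomial.coeff_sum_filter_monomial (s : Finset ι) (e : ι → σ →₀ ℕ) (c : ι → R)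
    (m : σ →₀ ℕ) :
    coeff m (∑ x ∈ s with P (e x), monomial (e x) (c x)) =
      if P m then coeff m (∑ x ∈ s, monomial (e x) (c x)) else 0 := by
  classical
  have hterm (x : ι) : (if P (e x) then (if e x = m then c x else 0) else 0) =
      if P m then (if e x = m then c x else 0) else 0 := by
    by_cases hx : e x = m <;> simp [hx]
  rw [sum_filter, coeff_sum, coeff_sum]
  simp only [apply_ite (coeff m), coeff_zero, coeff_monomial, hterm, sum_ite_irrel, sum_const_zero]

theorem MvPolynomial.sum_support_filter_monomial_coeff (s : Finset ι) (e : ι → σ →₀ ℕ)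
    (c : ι → R) :
    ∑ d ∈ (∑ x ∈ s, monomial (e x) (c x)).support with P d,
        monomial d (coeff d (∑ x ∈ s, monomial (e x) (c x))) =
      ∑ x ∈ s with P (e x), monomial (e x) (c x) := by
  ext m
  rw [coeff_sum_support_filter_monomial, coeff_sum_filter_monomial]

end Truncation

section Labeled

variable {α : Type*} {k : ℕ} (L : α → Finset (Fin k))

noncomputable def labExponent (S : Finset α) : Option (Fin k) →₀ ℕ :=
  Finsupp.single none #S + ∑ l ∈ S.biUnion L, Finsupp.single (some l) 1

theorem labExponent_some_ne_zero_iff (S : Finset α) (m : Fin k) :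
    labExponent L S (some m) ≠ 0 ↔ ∃ u ∈ S, m ∈ L u := by
  classical
  simp [labExponent, Finsupp.single_apply]

theorem X_pow_mul_prod_X_eq_monomial (S : Finset α) :
    (X none ^ #S * ∏ l ∈ S.biUnion L, X (some l) : MvPolynomial (Option (Fin k)) ℤ) =
      monomial (labExponent L S) 1 := by
  rw [labExponent, ← one_mul (1 : ℤ), ← monomial_mul, monomial_sum_one, X_pow_eq_monomial]
  rfl

open Classical in
theorem labIndepPoly_eq_sum_monomial [Fintype α] (G : SimpleGraph α) :
    labIndepPoly G L = ∑ S with IndepF G S, monomial (labExponent L S) 1 :=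
  sum_congr rfl fun S _ => X_pow_mul_prod_X_eq_monomial L S

theorem etaG_adj (G : SimpleGraph α) (i j : Fin k) (u v : α) :
    (etaG G L i j).Adj u v ↔
      G.Adj u v ∨ u ≠ v ∧ (i ∈ L u ∧ j ∈ L v ∨ i ∈ L v ∧ j ∈ L u) := by
  simp [etaG, SimpleGraph.fromRel_adj]

theorem indepF_etaG_iff (G : SimpleGraph α) {i j : Fin k} (hsep : ∀ v, ¬(i ∈ L v ∧ j ∈ L v))
    (S : Finset α) :
    IndepF (etaG G L i j) S ↔ IndepF G S ∧ ¬((∃ u ∈ S, i ∈ L u) ∧ ∃ v ∈ S, j ∈ L v) := by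
  constructor
  · intro h
    refine ⟨fun u hu v hv huv => h u hu v hv ((etaG_adj L G i j u v).2 (Or.inl huv)), ?_⟩
    rintro ⟨⟨u, hu, hiu⟩, v, hv, hjv⟩
    have hne : u ≠ v := by rintro rfl; exact hsep u ⟨hiu, hjv⟩
    exact h u hu v hv ((etaG_adj L G i j u v).2 (Or.inr ⟨hne, Or.inl ⟨hiu, hjv⟩⟩))
  · rintro ⟨hG, hij⟩ u hu v hv huv
    rcases (etaG_adj L G i j u v).1 huv with huv | ⟨-, ⟨hiu, hjv⟩ | ⟨hiv, hju⟩⟩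
    · exact hG u hu v hv huv
    · exact hij ⟨⟨u, hu, hiu⟩, v, hv, hjv⟩
    · exact hij ⟨⟨v, hv, hiv⟩, u, hu, hju⟩

end Labeled

open Classical in
theorem labIndepPoly_eta_general {α : Type*} [Fintype α] {k : ℕ} (H : SimpleGraph α)
    (L : α → Finset (Fin k)) (i j : Fin k)
    (hsep : ∀ v : α, ¬(i ∈ L v ∧ j ∈ L v)) :
    (∀ S : Finset α, IndepF (etaG H L i j) S ↔
      (IndepF H S ∧ ¬((∃ u ∈ S, i ∈ L u) ∧ ∃ v ∈ S, j ∈ L v))) ∧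
    labIndepPoly (etaG H L i j) L =
      ∑ d ∈ (labIndepPoly H L).support.filter
          (fun d : Option (Fin k) →₀ ℕ => ¬(d (some i) ≠ 0 ∧ d (some j) ≠ 0)),
        MvPolynomial.monomial d ((labIndepPoly H L).coeff d) := by
  refine ⟨indepF_etaG_iff L H hsep, ?_⟩
  rw [labIndepPoly_eq_sum_monomial, labIndepPoly_eq_sum_monomial,
    sum_support_filter_monomial_coeff, filter_filter]
  refine sum_congr (filter_congr fun S _ => ?_) fun _ _ => rfl
  simp only [labExponent_some_ne_zero_iff, indepF_etaG_iff L H hsep]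

open Classical in
/-- Adding the edges `η_{i,j}` (allowed since no vertex carries both
`i` and `j`): (1) a vertex set is independent in `η_{i,j}(H)` iff it is independent in
`H` and does not contain both a vertex carrying `i` and a vertex carrying `j`; and
(2) the `[k]`-labeled independent set polynomial of `η_{i,j}(H)` is the sum of the
monomials of that of `H` that are not divisible by `x_i · x_j`. -/
theorem labIndepPoly_eta {α : Type*} [Fintype α] {k : ℕ} (H : SimpleGraph α)
    (L : α → Finset (Fin k)) (i j : Fin k) (hij : i ≠ j)
    (hsep : ∀ v : α, ¬(i ∈ L v ∧ j ∈ L v)) :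
    (∀ S : Finset α, IndepF (etaG H L i j) S ↔
      (IndepF H S ∧ ¬((∃ u ∈ S, i ∈ L u) ∧ ∃ v ∈ S, j ∈ L v))) ∧
    labIndepPoly (etaG H L i j) L =
      ∑ d ∈ (labIndepPoly H L).support.filter
          (fun d : Option (Fin k) →₀ ℕ => ¬(d (some i) ≠ 0 ∧ d (some j) ≠ 0)),
        MvPolynomial.monomial d ((labIndepPoly H L).coeff d) :=
  labIndepPoly_eta_general H L i j hsep
end

section
/- Let H be a finite simple graph whose vertices carry label sets from {1,...,k}, let i ∈ {1,...,k} and S ⊆ {1,...,k}, and let H' = ρ_{i→S}(H) be the same graph in which the label i is replaced by the set S in the label set of every vertex carrying i. Then the [k]-labeled independent set polynomial P_{H'} is multilinear in x_1, ..., x_k and is congruent to the polynomial obtained from P_H by substituting the product ∏_{l∈S} x_l for x_i, modulo the ideal generated by x_1² − x_1, ..., x_k² − x_k. -/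
/-!
Modulo the ideal generated by the `x_l² − x_l` every label variable is idempotent, and for
idempotents the product over a union of index sets is the product of the products. So, after
reduction, the monomial of an independent set `T` factors as `x^|T| ∏_{v ∈ T} ∏_{j ∈ L v} x_j`
on both sides, and vertex by vertex, replacing the label `i` by `S` in `L v` is the same as
substituting `∏_{l ∈ S} x_l` for `x_i`. Multilinearity is immediate: each summand is `x^|T|`
times a product of distinct label variables.
-/

open MvPolynomial

/-- A polynomial is multilinear in the label variables `x₁, …, x_k` if every monomial
has degree at most 1 in each `x_l`. -/
def MultilinearInLabels {k : ℕ} (P : MvPolynomial (Option (Fin k)) ℤ) : Prop :=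
  ∀ d ∈ P.support, ∀ l : Fin k, d (some l) ≤ 1

/-- The ideal generated by `x₁² − x₁, …, x_k² − x_k`. -/
noncomputable def squareIdeal (k : ℕ) : Ideal (MvPolynomial (Option (Fin k)) ℤ) :=
  Ideal.span (Set.range fun l : Fin k => X (some l) ^ 2 - X (some l))

/-- `ρ_{i→S}` on labelings: replace the label `i` by the set `S` in the label set of
every vertex carrying `i`. -/
def relabL {α : Type*} {k : ℕ} (L : α → Finset (Fin k)) (i : Fin k)
    (S : Finset (Fin k)) : α → Finset (Fin k) :=
  fun v => if i ∈ L v then (L v).erase i ∪ S else L v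

namespace Finset

variable {ι κ M : Type*} [CommMonoid M] {g : ι → M}

theorem isIdempotentElem_prod (hg : ∀ j, IsIdempotentElem (g j)) (s : Finset ι) :
    IsIdempotentElem (∏ j ∈ s, g j) :=
  prod_induction _ _ (fun _ _ => IsIdempotentElem.mul) IsIdempotentElem.one fun j _ => hg j

theorem prod_mul_prod_of_subset_of_isIdempotentElem [DecidableEq ι]
    (hg : ∀ j, IsIdempotentElem (g j)) {s t : Finset ι} (h : t ⊆ s) :
    (∏ j ∈ s, g j) * ∏ j ∈ t, g j = ∏ j ∈ s, g j := by
  rw [← prod_sdiff h, mul_assoc, (isIdempotentElem_prod hg t).eq]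

theorem prod_union_of_isIdempotentElem [DecidableEq ι] (hg : ∀ j, IsIdempotentElem (g j))
    (s t : Finset ι) : ∏ j ∈ s ∪ t, g j = (∏ j ∈ s, g j) * ∏ j ∈ t, g j := by
  calc ∏ j ∈ s ∪ t, g j = (∏ j ∈ s ∪ t, g j) * ∏ j ∈ s ∩ t, g j :=
        (prod_mul_prod_of_subset_of_isIdempotentElem hg inter_subset_union).symm
    _ = (∏ j ∈ s, g j) * ∏ j ∈ t, g j := prod_union_inter

theorem prod_biUnion_of_isIdempotentElem [DecidableEq ι] [DecidableEq κ]
    (hg : ∀ j, IsIdempotentElem (g j)) (T : Finset κ) (L : κ → Finset ι) :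
    ∏ j ∈ T.biUnion L, g j = ∏ v ∈ T, ∏ j ∈ L v, g j := by
  induction T using Finset.induction_on with
  | empty => simp
  | insert v T hv ih =>
    rw [biUnion_insert, prod_union_of_isIdempotentElem hg, ih, prod_insert hv]

end Finset

theorem prod_relabL_of_isIdempotentElem {α M : Type*} [CommMonoid M] {k : ℕ} {x g : Fin k → M}
    (hx : ∀ l, IsIdempotentElem (x l)) {i : Fin k} {S : Finset (Fin k)}
    (hgi : g i = ∏ l ∈ S, x l) (hg : ∀ j ≠ i, g j = x j) (L : α → Finset (Fin k)) (v : α) :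
    ∏ j ∈ relabL L i S v, x j = ∏ j ∈ L v, g j := by
  unfold relabL
  split_ifs with hi
  · rw [Finset.prod_union_of_isIdempotentElem hx, ← Finset.mul_prod_erase _ _ hi, hgi,
      mul_comm]
    congr 1
    exact Finset.prod_congr rfl fun j hj => (hg j (Finset.ne_of_mem_erase hj)).symm
  · exact Finset.prod_congr rfl fun j hj => (hg j fun hji => hi (hji ▸ hj)).symm

open Classical in
theorem map_labIndepPoly_of_isIdempotentElem {α R : Type*} [Fintype α] [CommRing R] {k : ℕ}
    (φ : MvPolynomial (Option (Fin k)) ℤ →+* R) (hφ : ∀ l, IsIdempotentElem (φ (X (some l))))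
    (G : SimpleGraph α) (L : α → Finset (Fin k)) :
    φ (labIndepPoly G L) = ∑ T ∈ Finset.univ.filter (fun T : Finset α => IndepF G T),
      φ (X none) ^ T.card * ∏ v ∈ T, ∏ j ∈ L v, φ (X (some j)) := by
  simp only [labIndepPoly, map_sum, map_mul, map_pow, map_prod,
    Finset.prod_biUnion_of_isIdempotentElem hφ]

theorem isIdempotentElem_mk_X_some {k : ℕ} (l : Fin k) :
    IsIdempotentElem (Ideal.Quotient.mk (squareIdeal k) (X (some l))) := by
  rw [IsIdempotentElem, ← map_mul, ← pow_two, Ideal.Quotient.eq]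
  exact Ideal.subset_span ⟨l, rfl⟩

namespace MultilinearInLabels

variable {k : ℕ}

theorem sum {ι : Type*} {s : Finset ι} {P : ι → MvPolynomial (Option (Fin k)) ℤ}
    (hP : ∀ t ∈ s, MultilinearInLabels (P t)) : MultilinearInLabels (∑ t ∈ s, P t) := by
  intro d hd
  obtain ⟨t, ht, hdt⟩ := Finset.mem_biUnion.1 (support_sum hd)
  exact hP t ht d hdt

theorem X_none_pow_mul_prod (n : ℕ) (B : Finset (Fin k)) :
    MultilinearInLabels (X none ^ n * ∏ j ∈ B, X (some j) : MvPolynomial (Option (Fin k)) ℤ) := by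
  intro d hd l
  have hX : ∀ j : Fin k, (X (some j) : MvPolynomial (Option (Fin k)) ℤ)
      = monomial (Finsupp.single (some j) 1) 1 := fun _ => rfl
  rw [X_pow_eq_monomial, Finset.prod_congr rfl fun j _ => hX j, ← monomial_sum_one,
    monomial_mul, one_mul] at hd
  rw [Finset.mem_singleton.1 (support_monomial_subset hd)]
  simpa [Finsupp.single_apply] using ite_le_one (le_refl 1) zero_le_one

end MultilinearInLabels

open Classical in
/-- For `H' = ρ_{i→S}(H)`, the `[k]`-labeled independent set
polynomial of `H'` is multilinear in the label variables and is congruent, modulo the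
ideal generated by the `x_l² − x_l`, to the polynomial obtained from that of `H` by
substituting `∏_{l ∈ S} x_l` for `x_i`. -/
theorem labIndepPoly_rho {α : Type*} [Fintype α] {k : ℕ} (H : SimpleGraph α)
    (L : α → Finset (Fin k)) (i : Fin k) (S : Finset (Fin k)) :
    MultilinearInLabels (labIndepPoly H (relabL L i S)) ∧
    labIndepPoly H (relabL L i S) -
        MvPolynomial.aeval
          (fun v : Option (Fin k) =>
            if v = some i then ∏ l ∈ S, X (some l) else X v)
          (labIndepPoly H L)
      ∈ squareIdeal k := by
  refine ⟨MultilinearInLabels.sum fun T _ => MultilinearInLabels.X_none_pow_mul_prod _ _, ?_⟩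
  set q := Ideal.Quotient.mk (squareIdeal k)
  set φ := q.comp (aeval (R := ℤ) fun v : Option (Fin k) =>
    if v = some i then ∏ l ∈ S, X (some l) else X v).toRingHom
  have hφi : φ (X (some i)) = ∏ l ∈ S, q (X (some l)) := by simp [φ]
  have hφ : ∀ j ≠ i, φ (X (some j)) = q (X (some j)) := fun j hj => by simp [φ, hj]
  have hφ_idem : ∀ j, IsIdempotentElem (φ (X (some j))) := fun j => by
    by_cases hj : j = i
    · exact hj ▸ hφi ▸ Finset.isIdempotentElem_prod isIdempotentElem_mk_X_some S
    · exact hφ j hj ▸ isIdempotentElem_mk_X_some j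
  rw [← Ideal.Quotient.eq]
  change q _ = φ _
  rw [map_labIndepPoly_of_isIdempotentElem q isIdempotentElem_mk_X_some,
    map_labIndepPoly_of_isIdempotentElem φ hφ_idem]
  have hφnone : φ (X none) = q (X none) := by simp [φ]
  refine Finset.sum_congr rfl fun T _ => ?_
  rw [hφnone]
  congr 1
  exact Finset.prod_congr rfl fun v _ =>
    prod_relabL_of_isIdempotentElem isIdempotentElem_mk_X_some hφi hφ L v
end

section
/- Let H be a finite simple graph whose vertices carry label sets from {1,...,k}, let i ≠ j be labels such that no vertex of H carries both i and j, let H' = η_{i,j}(H) be the graph obtained from H by adding an edge between every vertex carrying label i and every vertex carrying label j, and let Q be a finite set of colors. Then H' has a proper coloring with colors Q and color-label incidence R ⊆ Q × {1,...,k} if and only if H has a proper coloring with colors Q and color-label incidence R and there is no color q ∈ Q with both (q, i) ∈ R and (q, j) ∈ R. -/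
/-- `G`, with vertex label sets `L`, has a proper coloring with color set `Q` whose
color-label incidence is exactly the relation `R ⊆ Q × {1,…,k}`: there is a map
`φ` from vertices to `Q` giving adjacent vertices different colors, such that
`(q, l) ∈ R` iff some vertex `v` has `φ v = q` and `l ∈ L v`. -/
def HasColoring {α : Type*} {k : ℕ} (G : SimpleGraph α) (L : α → Finset (Fin k))
    (Q : Type*) (R : Set (Q × Fin k)) : Prop :=
  ∃ φ : α → Q, (∀ u v : α, G.Adj u v → φ u ≠ φ v) ∧
    R = {p : Q × Fin k | ∃ v : α, φ v = p.1 ∧ p.2 ∈ L v}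

/-- For `H' = η_{i,j}(H)` (allowed since no vertex carries both `i`
and `j`): `H'` has a proper coloring with colors `Q` and color-label incidence `R` iff
`H` has one, and no color `q` has both `(q, i) ∈ R` and `(q, j) ∈ R`. -/
theorem hasColoring_eta {α : Type*} [Fintype α] {k : ℕ} (H : SimpleGraph α)
    (L : α → Finset (Fin k)) (i j : Fin k) (hij : i ≠ j)
    (hsep : ∀ v : α, ¬(i ∈ L v ∧ j ∈ L v))
    (Q : Type*) [Fintype Q] (R : Set (Q × Fin k)) :
    HasColoring (etaG H L i j) L Q R ↔
      HasColoring H L Q R ∧ ∀ q : Q, ¬((q, i) ∈ R ∧ (q, j) ∈ R) := by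
  constructor
  · rintro ⟨φ, hp, hR⟩
    refine ⟨⟨φ, fun u v huv => hp u v (by simp [etaG, huv]), hR⟩, ?_⟩
    rintro q ⟨hqi, hqj⟩
    rw [hR] at hqi hqj
    obtain ⟨u, hu1, hu2⟩ := hqi
    obtain ⟨v, hv1, hv2⟩ := hqj
    have huv : u ≠ v := fun h => hsep u ⟨hu2, h ▸ hv2⟩
    exact hp u v (by simp [etaG, SimpleGraph.fromRel_adj, huv, hu2, hv2]) (hu1.trans hv1.symm)
  · rintro ⟨⟨φ, hp, hR⟩, hno⟩
    refine ⟨φ, ?_, hR⟩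
    intro u v huv
    rcases huv with h | ⟨hne, h⟩
    · exact hp u v h
    intro heq
    rcases h with ⟨hi, hj⟩ | ⟨hi, hj⟩
    · exact hno (φ u) ⟨hR ▸ ⟨u, rfl, hi⟩, hR ▸ ⟨v, heq.symm, hj⟩⟩
    · exact hno (φ u) ⟨hR ▸ ⟨v, heq.symm, hi⟩, hR ▸ ⟨u, rfl, hj⟩⟩
end

section
/- Let H be a finite simple graph whose vertices carry label sets from {1,...,k}, let i ≠ j be labels, let H' = ρ_{i→{j}}(H) be the same graph in which label i is replaced by label j in the label set of every vertex carrying i, and let Q be a finite set of colors. Then H' has a proper coloring with colors Q and color-label incidence R ⊆ Q × {1,...,k} if and only if there exists a relation R' such that H has a proper coloring with colors Q and color-label incidence R' and R = {(q, l) ∈ R' : l ∉ {i, j}} ∪ {(q, j) : (q, i) ∈ R' or (q, j) ∈ R'}. -/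
lemma relab_incidence {α : Type*} {k : ℕ} (L : α → Finset (Fin k)) (i j : Fin k)
    (hij : i ≠ j) (Q : Type*) (φ : α → Q) :
    {p : Q × Fin k | ∃ v, φ v = p.1 ∧ p.2 ∈ relabL L i {j} v} =
      {p : Q × Fin k | p ∈ {p : Q × Fin k | ∃ v, φ v = p.1 ∧ p.2 ∈ L v} ∧ p.2 ≠ i ∧ p.2 ≠ j} ∪
      {p : Q × Fin k | p.2 = j ∧ ((p.1, i) ∈ {p : Q × Fin k | ∃ v, φ v = p.1 ∧ p.2 ∈ L v} ∨
        (p.1, j) ∈ {p : Q × Fin k | ∃ v, φ v = p.1 ∧ p.2 ∈ L v})} := by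
  ext ⟨q, l⟩
  simp only [Set.mem_setOf_eq, Set.mem_union, relabL]
  constructor
  · rintro ⟨v, rfl, hl⟩
    by_cases hiv : i ∈ L v
    · simp only [hiv, if_true, Finset.mem_union, Finset.mem_erase,
        Finset.mem_singleton] at hl
      rcases hl with ⟨hne, hmem⟩ | rfl
      · by_cases hlj : l = j
        · subst hlj; exact Or.inr ⟨rfl, Or.inr ⟨v, rfl, hmem⟩⟩
        · exact Or.inl ⟨⟨v, rfl, hmem⟩, hne, hlj⟩
      · exact Or.inr ⟨rfl, Or.inl ⟨v, rfl, hiv⟩⟩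
    · simp only [hiv, if_false] at hl
      by_cases hlj : l = j
      · subst hlj; exact Or.inr ⟨rfl, Or.inr ⟨v, rfl, hl⟩⟩
      · exact Or.inl ⟨⟨v, rfl, hl⟩, fun h => hiv (h ▸ hl), hlj⟩
  · rintro (⟨⟨v, rfl, hmem⟩, hni, hnj⟩ | ⟨rfl, ⟨v, rfl, hmem⟩ | ⟨v, rfl, hmem⟩⟩)
    · exact ⟨v, rfl, by by_cases h : i ∈ L v <;>
        simp [h, Finset.mem_union, Finset.mem_erase, hni, hmem]⟩
    · exact ⟨v, rfl, by simp [hmem, Finset.mem_union]⟩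
    · exact ⟨v, rfl, by by_cases h : i ∈ L v <;>
        simp [h, Finset.mem_union, Finset.mem_erase, hij.symm, hmem]⟩

/-- For `H' = ρ_{i→{j}}(H)` (`i ≠ j`, label `i` replaced by `j`):
`H'` has a proper coloring with colors `Q` and color-label incidence `R` iff `H` has a
proper coloring with colors `Q` and some color-label incidence `R'` with
`R = {(q,l) ∈ R' : l ∉ {i,j}} ∪ {(q,j) : (q,i) ∈ R' ∨ (q,j) ∈ R'}`. -/
theorem hasColoring_rho {α : Type*} [Fintype α] {k : ℕ} (H : SimpleGraph α)
    (L : α → Finset (Fin k)) (i j : Fin k) (hij : i ≠ j)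
    (Q : Type*) [Fintype Q] (R : Set (Q × Fin k)) :
    HasColoring H (relabL L i {j}) Q R ↔
      ∃ R' : Set (Q × Fin k), HasColoring H L Q R' ∧
        R = {p : Q × Fin k | p ∈ R' ∧ p.2 ≠ i ∧ p.2 ≠ j} ∪
            {p : Q × Fin k | p.2 = j ∧ ((p.1, i) ∈ R' ∨ (p.1, j) ∈ R')} := by
  constructor
  · rintro ⟨φ, hadj, rfl⟩
    exact ⟨_, ⟨φ, hadj, rfl⟩, relab_incidence L i j hij Q φ⟩
  · rintro ⟨R', ⟨φ, hadj, rfl⟩, rfl⟩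
    exact ⟨φ, hadj, (relab_incidence L i j hij Q φ).symm⟩
end
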